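/- arXiv:2307.06881 — 9 statements merged into one kernel-verified Lean document; each statement's English description precedes it below -/
import Mathlib

section
/- For every infinite set D ⊆ ℕ there is an infinite subset D' ⊆ D which is very sparse. -/
/-- Set of finite nonempty sums of distinct elements of `B`. -/
def FS (B : Set ℕ) : Set ℕ :=
  {n | ∃ F : Finset ℕ, F.Nonempty ∧ ↑F ⊆ B ∧ F.sum id = n}

/-- `F` is a representation of `x` as a finite nonempty sum of distinct elements of `D`. -/
def Represents (D : Set ℕ) (F : Finset ℕ) (x : ℕ) : Prop :=
  F.Nonempty ∧ ↑F ⊆ D ∧ F.sum id = x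

/-- `D` is sparse: every element of `FS D` has a unique representation. -/
def Sparse (D : Set ℕ) : Prop :=
  ∀ x ∈ FS D, ∃! F : Finset ℕ, Represents D F x

/-- `D` is very sparse. -/
def VerySparse (D : Set ℕ) : Prop :=
  Sparse D ∧ ∀ x y F G, Represents D F x → Represents D G y →
    (F ∩ G).Nonempty → x + y ∉ FS D

/-- Membership in the Hindman ideal. -/
def InHindman (A : Set ℕ) : Prop :=
  ∀ B : Set ℕ, B.Infinite → ¬ FS B ⊆ A

/-!
Pick `d₀ < d₁ < ⋯` in `D` with each `dₙ` larger than twice `d₀ + ⋯ + dₙ₋₁`. Then an expansion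
`∑ cᵢ dᵢ` with digits `cᵢ ∈ {0, 1, 2}` is unique: the lower terms sum to less than the top `dₙ`,
so the top digit is a quotient by `dₙ`. An element of `FS` is such an expansion with digits `0, 1`,
which gives sparseness; if representations of `x` and `y` share a term, then `x + y` has a digit
`2` there, so it is not in `FS`.
-/

open Finset

def Superincreasing (f : ℕ → ℕ) : Prop :=
  ∀ n, 2 * ∑ i ∈ range n, f i < f n

namespace Superincreasing

variable {f : ℕ → ℕ}

theorem pos (hf : Superincreasing f) (n : ℕ) : 0 < f n :=
  (Nat.zero_le _).trans_lt (hf n)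

theorem strictMono (hf : Superincreasing f) : StrictMono f :=
  strictMono_nat_of_lt_succ fun n => by
    have := hf (n + 1)
    rw [sum_range_succ] at this
    omega

theorem sum_range_mul_lt (hf : Superincreasing f) {g : ℕ → ℕ} (hg : ∀ i, g i ≤ 2) (N : ℕ) :
    ∑ i ∈ range N, g i * f i < f N :=
  calc ∑ i ∈ range N, g i * f i
      ≤ ∑ i ∈ range N, 2 * f i := sum_le_sum fun i _ => Nat.mul_le_mul_right _ (hg i)
    _ = 2 * ∑ i ∈ range N, f i := (mul_sum ..).symm
    _ < f N := hf N

theorem eq_of_sum_range_mul_eq (hf : Superincreasing f) {g h : ℕ → ℕ}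
    (hg : ∀ i, g i ≤ 2) (hh : ∀ i, h i ≤ 2) {N : ℕ}
    (hgh : ∑ i ∈ range N, g i * f i = ∑ i ∈ range N, h i * f i) : ∀ i < N, g i = h i := by
  induction N with
  | zero => simp
  | succ N ih =>
    rw [sum_range_succ, sum_range_succ] at hgh
    have top_digit : ∀ k : ℕ → ℕ, (∀ i, k i ≤ 2) →
        (∑ i ∈ range N, k i * f i + k N * f N) / f N = k N := fun k hk => by
      rw [Nat.add_mul_div_right _ _ (hf.pos N), Nat.div_eq_of_lt (hf.sum_range_mul_lt hk N),
        zero_add]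
    have htop : g N = h N := by rw [← top_digit g hg, ← top_digit h hh, hgh]
    rw [htop] at hgh
    intro i hi
    rcases Nat.lt_succ_iff_lt_or_eq.mp hi with hi | rfl
    · exact ih (Nat.add_right_cancel hgh) i hi
    · exact htop

theorem disjoint_and_union_eq_of_sum_add_sum_eq (hf : Superincreasing f) {A B C : Finset ℕ}
    (h : ∑ i ∈ A, f i + ∑ i ∈ B, f i = ∑ i ∈ C, f i) : Disjoint A B ∧ A ∪ B = C := by
  obtain ⟨N, hN⟩ := (A ∪ B ∪ C).exists_nat_subset_range
  have sum_boole : ∀ s ⊆ range N, ∑ i ∈ range N, (if i ∈ s then 1 else 0) * f i = ∑ i ∈ s, f i :=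
    fun s hs => by simp_rw [boole_mul, sum_ite_mem, inter_eq_right.mpr hs]
  have hdigits := hf.eq_of_sum_range_mul_eq (N := N)
    (g := fun i => (if i ∈ A then 1 else 0) + if i ∈ B then 1 else 0)
    (h := fun i => if i ∈ C then 1 else 0) (fun i => by split_ifs <;> simp)
    (fun i => by split_ifs <;> simp) (by
      simp only [add_mul, sum_add_distrib]
      rw [sum_boole A fun i hi => hN (by simp [hi]), sum_boole B fun i hi => hN (by simp [hi]),
        sum_boole C fun i hi => hN (by simp [hi]), h])
  have hmem : ∀ i,
      ((if i ∈ A then 1 else 0) + if i ∈ B then 1 else 0) = if i ∈ C then 1 else 0 := by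
    intro i
    by_cases hi : i < N
    · exact hdigits i hi
    · have : i ∉ A ∪ B ∪ C := fun h => hi (mem_range.mp (hN h))
      simp_all
  refine ⟨disjoint_left.mpr fun i hA hB => ?_, ext fun i => ?_⟩ <;>
    have := hmem i <;> split_ifs at this <;> simp_all

theorem disjoint_and_union_eq_of_sum_id_add_sum_id_eq (hf : Superincreasing f)
    {F G H : Finset ℕ} (hF : ↑F ⊆ Set.range f) (hG : ↑G ⊆ Set.range f) (hH : ↑H ⊆ Set.range f)
    (h : F.sum id + G.sum id = H.sum id) : Disjoint F G ∧ F ∪ G = H := by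
  have hinj := hf.strictMono.injective
  have exists_image_eq : ∀ {E : Finset ℕ}, ↑E ⊆ Set.range f → ∃ A : Finset ℕ, A.image f = E :=
    fun hE => by
      obtain ⟨A, -, hA⟩ := subset_set_image_iff.mp ((Set.image_univ (f := f)).symm ▸ hE)
      exact ⟨A, hA⟩
  obtain ⟨A, rfl⟩ := exists_image_eq hF
  obtain ⟨B, rfl⟩ := exists_image_eq hG
  obtain ⟨C, rfl⟩ := exists_image_eq hH
  simp only [sum_image hinj.injOn, id] at h
  obtain ⟨hAB, hABC⟩ := hf.disjoint_and_union_eq_of_sum_add_sum_eq h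
  exact ⟨(disjoint_image hinj).mpr hAB, by rw [← image_union, hABC]⟩

theorem verySparse_range (hf : Superincreasing f) : VerySparse (Set.range f) := by
  have key := @hf.disjoint_and_union_eq_of_sum_id_add_sum_id_eq
  refine ⟨fun x ⟨F, hF⟩ => ⟨F, hF, fun G hG => ?_⟩,
    fun x y F G hF hG hFG ⟨H, _, hH, hHsum⟩ => ?_⟩
  · simpa using (key (G := ∅) hG.2.1 (by simp) hF.2.1
      (by rw [sum_empty, add_zero, hG.2.2, hF.2.2])).2
  · exact not_disjoint_iff_nonempty_inter.mpr hFG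
      (key hF.2.1 hG.2.1 hH (by rw [hF.2.2, hG.2.2, hHsum])).1

end Superincreasing

theorem Set.Infinite.exists_superincreasing_mem {D : Set ℕ} (hD : D.Infinite) :
    ∃ f, Superincreasing f ∧ ∀ n, f n ∈ D := by
  choose next hnextD hnext_gt using hD.exists_gt
  let s : ℕ → ℕ := fun n => n.rec 0 fun _ t => t + next (2 * t)
  have hs : ∀ n, s n = ∑ i ∈ Finset.range n, next (2 * s i) := fun n => by
    induction n with
    | zero => rfl
    | succ n ih => rw [sum_range_succ, ← ih]
  exact ⟨fun n => next (2 * s n), fun n => hs n ▸ hnext_gt _, fun n => hnextD _⟩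

theorem every_infinite_set_has_very_sparse_infinite_subset :
    ∀ D : Set ℕ, D.Infinite →
      ∃ D' : Set ℕ, D' ⊆ D ∧ D'.Infinite ∧ VerySparse D' := by
  intro D hD
  obtain ⟨f, hf, hfD⟩ := hD.exists_superincreasing_mem
  exact ⟨Set.range f, Set.range_subset_iff.mpr hfD,
    Set.infinite_range_of_injective hf.strictMono.injective, hf.verySparse_range⟩
end

section
/- If D ⊆ ℕ is very sparse, then for every y ∈ FS(D), the set {x ∈ FS(D) : α_D(x) ∩ α_D(y) ≠ ∅} belongs to the Hindman ideal, i.e., it contains no set of the form FS(B) for an infinite B ⊆ ℕ. -/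
/-!
If `FS B` lay in the set, every `b ∈ B` would have a summand in common with some representation
of `y`, hence a summand `≤ y`. By pigeonhole two distinct `b₁, b₂ ∈ B` share such a summand, and
very sparseness forbids `b₁ + b₂ ∈ FS B ⊆ FS D`.
-/

theorem Represents.le_of_mem {D : Set ℕ} {F : Finset ℕ} {x g : ℕ}
    (hF : Represents D F x) (hg : g ∈ F) : g ≤ x := by
  rw [← hF.2.2]
  exact Finset.single_le_sum (f := id) (fun _ _ => Nat.zero_le _) hg

theorem mem_FS_of_mem {B : Set ℕ} {b : ℕ} (hb : b ∈ B) : b ∈ FS B :=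
  ⟨{b}, Finset.singleton_nonempty b, by simpa using hb, by simp⟩

theorem add_mem_FS {B : Set ℕ} {b₁ b₂ : ℕ} (hb₁ : b₁ ∈ B) (hb₂ : b₂ ∈ B) (hne : b₁ ≠ b₂) :
    b₁ + b₂ ∈ FS B := by
  refine ⟨{b₁, b₂}, Finset.insert_nonempty _ _, ?_, Finset.sum_pair hne⟩
  simpa [Set.insert_subset_iff] using ⟨hb₁, hb₂⟩

theorem VerySparse.not_FS_subset_of_summand_mem_finite {D S B : Set ℕ} (hD : VerySparse D)
    (hS : S.Finite) (hB : B.Infinite)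
    (hsummand : ∀ b ∈ B, ∃ F, Represents D F b ∧ ∃ g ∈ F, g ∈ S) : ¬ FS B ⊆ FS D := by
  intro hsub
  choose! F hF g hgF hgS using hsummand
  obtain ⟨b₁, hb₁, b₂, hb₂, hne, hg⟩ := hB.exists_ne_map_eq_of_mapsTo hgS hS
  have hcommon : (F b₁ ∩ F b₂).Nonempty :=
    ⟨g b₁, Finset.mem_inter.2 ⟨hgF b₁ hb₁, hg ▸ hgF b₂ hb₂⟩⟩
  exact hD.2 b₁ b₂ _ _ (hF b₁ hb₁) (hF b₂ hb₂) hcommon (hsub (add_mem_FS hb₁ hb₂ hne))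

theorem very_sparse_intersecting_alpha_in_hindman_general
    (D : Set ℕ) (hD : VerySparse D) (y : ℕ) :
    InHindman {x | x ∈ FS D ∧ ∃ F G : Finset ℕ,
      Represents D F x ∧ Represents D G y ∧ (F ∩ G).Nonempty} := by
  intro B hB hsub
  refine hD.not_FS_subset_of_summand_mem_finite (Set.finite_Iic y) hB ?_
    (hsub.trans fun _ hx => hx.1)
  intro b hb
  obtain ⟨-, F, G, hF, hG, g, hg⟩ := hsub (mem_FS_of_mem hb)
  rw [Finset.mem_inter] at hg
  exact ⟨F, hF, g, hg.1, hG.le_of_mem hg.2⟩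

theorem very_sparse_intersecting_alpha_in_hindman
    (D : Set ℕ) (hD : VerySparse D) (y : ℕ) (hy : y ∈ FS D) :
    InHindman {x | x ∈ FS D ∧ ∃ F G : Finset ℕ,
      Represents D F x ∧ Represents D G y ∧ (F ∩ G).Nonempty} :=
  very_sparse_intersecting_alpha_in_hindman_general D hD y
end

section
/- The Hindman ideal is tall: every infinite set A ⊆ ℕ has an infinite subset B ⊆ A such that B contains no set of the form FS(C) for infinite C. -/
def SumFree {α : Type*} [Add α] (B : Set α) : Prop :=
  ∀ x ∈ B, ∀ y ∈ B, x + y ∉ B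

section FS

variable {C : Set ℕ} {a b : ℕ}

theorem mem_FS_of_mem_s3 (ha : a ∈ C) : a ∈ FS C :=
  ⟨{a}, Finset.singleton_nonempty a, by simpa using ha, Finset.sum_singleton id a⟩

theorem add_mem_FS_s3 (ha : a ∈ C) (hb : b ∈ C) (hab : a ≠ b) : a + b ∈ FS C := by
  refine ⟨{a, b}, Finset.insert_nonempty a {b}, ?_, Finset.sum_pair hab⟩
  simpa [Set.insert_subset_iff] using ⟨ha, hb⟩

theorem SumFree.not_FS_subset {B : Set ℕ} (hB : SumFree B) (hC : C.Nontrivial) :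
    ¬ FS C ⊆ B := by
  intro hsub
  obtain ⟨a, ha, b, hb, hab⟩ := hC
  exact hB a (hsub (mem_FS_of_mem_s3 ha)) b (hsub (mem_FS_of_mem_s3 hb)) (hsub (add_mem_FS_s3 ha hb hab))

theorem SumFree.inHindman {B : Set ℕ} (hB : SumFree B) : InHindman B :=
  fun _ hC => hB.not_FS_subset hC.nontrivial

end FS

section Lacunary

variable {f : ℕ → ℕ}

theorem strictMono_of_two_mul_lt (hf : ∀ n, 2 * f n < f (n + 1)) : StrictMono f :=
  strictMono_nat_of_lt_succ fun n => by have := hf n; omega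

theorem sumFree_range_of_two_mul_lt (h0 : 0 < f 0) (hf : ∀ n, 2 * f n < f (n + 1)) :
    SumFree (Set.range f) := by
  have hmono := strictMono_of_two_mul_lt hf
  suffices key : ∀ i j k, i ≤ j → f i + f j ≠ f k by
    rintro _ ⟨i, rfl⟩ _ ⟨j, rfl⟩ ⟨k, hk⟩
    rcases le_total i j with hij | hji
    · exact key i j k hij hk.symm
    · exact key j i k hji (by rw [add_comm]; exact hk.symm)
  intro i j k hij hk
  have hpos : 0 < f i := h0.trans_le (hmono.monotone i.zero_le)
  have hjk : j < k := hmono.lt_iff_lt.mp (by omega)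
  have hsucc : f (j + 1) ≤ f k := hmono.monotone hjk
  have hfij : f i ≤ f j := hmono.monotone hij
  have := hf j
  omega

end Lacunary

theorem Set.Infinite.exists_two_mul_lt_seq {A : Set ℕ} (hA : A.Infinite) :
    ∃ f : ℕ → ℕ, (∀ n, f n ∈ A) ∧ 0 < f 0 ∧ ∀ n, 2 * f n < f (n + 1) := by
  choose next hnextA hnext using hA.exists_gt
  let f : ℕ → ℕ := fun n => Nat.rec (next 0) (fun _ x => next (2 * x)) n
  refine ⟨f, fun n => ?_, hnext 0, fun n => hnext (2 * f n)⟩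
  cases n <;> exact hnextA _

theorem hindman_ideal_tall :
    ∀ A : Set ℕ, A.Infinite →
      ∃ B : Set ℕ, B ⊆ A ∧ B.Infinite ∧ InHindman B := by
  intro A hA
  obtain ⟨f, hfA, h0, hf⟩ := hA.exists_two_mul_lt_seq
  refine ⟨Set.range f, Set.range_subset_iff.mpr hfA, ?_, ?_⟩
  · exact Set.infinite_range_of_injective (strictMono_of_two_mul_lt hf).injective
  · exact (sumFree_range_of_two_mul_lt h0 hf).inHindman
end

section
/- The ideal Fin² is Katětov below the Ramsey ideal: there exists a function f : [ℕ]² → ℕ×ℕ such that f⁻¹[C] belongs to the Ramsey ideal for every C ∈ Fin². -/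
/-- The set of unordered pairs of distinct elements of `H`. -/
def pairsOf (H : Set ℕ) : Set (Sym2 ℕ) :=
  {p | ∃ a b, a ≠ b ∧ a ∈ H ∧ b ∈ H ∧ p = Sym2.mk a b}

/-- Membership in the Ramsey ideal. -/
def InRamsey (A : Set (Sym2 ℕ)) : Prop :=
  ∀ H : Set ℕ, H.Infinite → ¬ pairsOf H ⊆ A

/-- Membership in the ideal Fin² on ℕ × ℕ. -/
def InFinSq (C : Set (ℕ × ℕ)) : Prop :=
  {n : ℕ | {k : ℕ | (n, k) ∈ C}.Infinite}.Finite

/-!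
Send a pair `{a, b}` with `a < b` to `(a, b)`. If `C ∈ Fin²` and `H` is infinite, some `a ∈ H`
has a finite section `C_a`, and then any `b ∈ H` above `a` and outside `C_a` gives a pair of
`[H]²` whose image `(a, b)` avoids `C`.
-/

theorem InFinSq.exists_mem_section_finite {C : Set (ℕ × ℕ)} (hC : InFinSq C) {H : Set ℕ}
    (hH : H.Infinite) : ∃ a ∈ H, {k | (a, k) ∈ C}.Finite := by
  obtain ⟨a, haH, ha⟩ := (hH.sdiff hC).nonempty
  exact ⟨a, haH, Set.not_infinite.mp ha⟩

theorem InFinSq.exists_lt_notMem {C : Set (ℕ × ℕ)} (hC : InFinSq C) {H : Set ℕ}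
    (hH : H.Infinite) : ∃ a ∈ H, ∃ b ∈ H, a < b ∧ (a, b) ∉ C := by
  obtain ⟨a, haH, hfin⟩ := hC.exists_mem_section_finite hH
  obtain ⟨b, hbH, hb⟩ := (hH.sdiff (hfin.union (Set.finite_le_nat a))).nonempty
  simp only [Set.mem_union, Set.mem_ofPred_eq, not_or, not_le] at hb
  exact ⟨a, haH, b, hbH, hb.2, hb.1⟩

theorem finsq_katetov_below_ramsey :
    ∃ f : Sym2 ℕ → ℕ × ℕ, ∀ C : Set (ℕ × ℕ), InFinSq C → InRamsey (f ⁻¹' C) := by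
  refine ⟨fun p => (p.inf, p.sup), fun C hC H hH hsub => ?_⟩
  obtain ⟨a, haH, b, hbH, hab, habC⟩ := hC.exists_lt_notMem hH
  have hmem : (s(a, b).inf, s(a, b).sup) ∈ C := hsub ⟨a, b, hab.ne, haH, hbH, rfl⟩
  rw [Sym2.inf_mk, Sym2.sup_mk, inf_of_le_left hab.le, sup_of_le_right hab.le] at hmem
  exact habC hmem
end

section
/- The summable ideal is not Katětov below the van der Waerden ideal: for every function φ : ℕ → ℕ there exists A ⊆ ℕ such that A contains arithmetic progressions of arbitrary finite length while ∑_{y ∈ φ[A]} 1/(y+1) < ∞. -/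
/-!
Either some sublevel set `{x | φ x ≤ m}` contains arbitrarily long progressions, and then it is a
witness with finite image, or by van der Waerden every superlevel set `{x | m < φ x}` does. In the
second case pick, for each `k`, a progression of length `k` on which `φ > k 2^k`; the union `A` of
these progressions contains arbitrarily long progressions, while the `k`-th one contributes at most
`k / (k 2^k + 1) ≤ 2^{-k}` to the sum over `φ[A]`.
-/

/-- Membership in the summable ideal. -/
def InSummable (A : Set ℕ) : Prop :=
  Summable (fun n : A => (1 : ℝ) / ((n : ℕ) + 1))

/-- `A` contains an arithmetic progression of length `k`. -/
def HasAP (A : Set ℕ) (k : ℕ) : Prop :=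
  ∃ a d : ℕ, 0 < d ∧ ∀ i < k, a + i * d ∈ A

theorem HasAP.mono_length {A : Set ℕ} {j k : ℕ} (h : HasAP A k) (hjk : j ≤ k) : HasAP A j :=
  let ⟨a, d, hd, hA⟩ := h
  ⟨a, d, hd, fun i hi => hA i (hi.trans_le hjk)⟩

theorem hasAP_or_hasAP_compl (S : Set ℕ) (k : ℕ) : HasAP S k ∨ HasAP Sᶜ k := by
  obtain ⟨d, hd, a, c, hc⟩ :=
    Combinatorics.exists_mono_homothetic_copy (Finset.range k) (· ∈ S)
  have hprog : ∀ i < k, (a + i * d ∈ S ↔ c) := fun i hi => by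
    simpa [smul_eq_mul, Nat.mul_comm, Nat.add_comm] using
      iff_of_eq (hc i (Finset.mem_range.2 hi))
  by_cases hcS : c
  · exact .inl ⟨a, d, hd, fun i hi => (hprog i hi).2 hcS⟩
  · exact .inr ⟨a, d, hd, fun i hi => fun hS => hcS ((hprog i hi).1 hS)⟩

theorem hasAP_compl_of_not_hasAP {S : Set ℕ} {k₀ : ℕ} (h : ¬HasAP S k₀) (k : ℕ) :
    HasAP Sᶜ k :=
  ((hasAP_or_hasAP_compl S (max k₀ k)).resolve_left fun hS =>
    h (hS.mono_length (le_max_left _ _))).mono_length (le_max_right _ _)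

theorem inSummable_of_finite {S : Set ℕ} (hS : S.Finite) : InSummable S :=
  have := hS.to_subtype
  Summable.of_finite

theorem inSummable_range_of_summable {ι : Type*} {σ : ι → ℕ}
    (hσ : Summable fun x => (1 : ℝ) / (σ x + 1)) : InSummable (Set.range σ) := by
  have := hσ.comp_injective (Set.rangeSplitting_injective σ)
  simpa only [InSummable, Function.comp_def, Set.apply_rangeSplitting] using this

theorem summable_one_div_succ_of_two_pow_mul_lt {σ : (Σ k : ℕ, Fin k) → ℕ}
    (hσ : ∀ k (i : Fin k), k * 2 ^ k < σ ⟨k, i⟩) :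
    Summable fun p => (1 : ℝ) / (σ p + 1) := by
  refine (summable_sigma_of_nonneg fun _ => by positivity).2
    ⟨fun _ => Summable.of_finite, summable_geometric_two.of_nonneg_of_le
      (fun _ => tsum_nonneg fun _ => by positivity) fun k => ?_⟩
  have hterm (i : Fin k) : (1 : ℝ) / (σ ⟨k, i⟩ + 1) ≤ 1 / (k * 2 ^ k + 1) := by
    gcongr
    exact_mod_cast (hσ k i).le
  calc ∑' i : Fin k, (1 : ℝ) / (σ ⟨k, i⟩ + 1)
      ≤ ∑ _i : Fin k, (1 : ℝ) / (k * 2 ^ k + 1) := by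
        rw [tsum_fintype]
        exact Finset.sum_le_sum fun i _ => hterm i
    _ = k / (k * 2 ^ k + 1) := by simp [div_eq_mul_inv]
    _ ≤ (1 / 2) ^ k := by
        rw [div_pow, one_pow, div_le_div_iff₀ (by positivity) (by positivity)]
        linarith

theorem summable_not_katetov_below_vdw :
    ∀ φ : ℕ → ℕ, ∃ A : Set ℕ, (∀ k : ℕ, HasAP A k) ∧ InSummable (φ '' A) := by
  intro φ
  by_cases hlow : ∃ m, ∀ k, HasAP {x | φ x ≤ m} k
  · obtain ⟨m, hm⟩ := hlow
    refine ⟨_, hm, inSummable_of_finite ((Set.finite_Iic m).subset ?_)⟩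
    rintro _ ⟨x, hx, rfl⟩
    exact hx
  push Not at hlow
  have hhigh (k : ℕ) : HasAP {x | k * 2 ^ k < φ x} k := by
    obtain ⟨k₀, hk₀⟩ := hlow (k * 2 ^ k)
    simpa [Set.compl_ofPred] using hasAP_compl_of_not_hasAP hk₀ k
  choose a d hd hφ using hhigh
  refine ⟨Set.range fun p : Σ k, Fin k => a p.1 + p.2 * d p.1,
    fun k => ⟨a k, d k, hd k, fun i hi => ⟨⟨k, i, hi⟩, rfl⟩⟩, ?_⟩
  rw [← Set.range_comp]
  exact inSummable_range_of_summable
    (summable_one_div_succ_of_two_pow_mul_lt fun k i => hφ k i i.2)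
end

section
/- The summable ideal is not Katětov below the Hindman ideal: for every function φ : ℕ → ℕ there exists an infinite set D ⊆ ℕ such that ∑_{y ∈ φ[FS(D)]} 1/(y+1) < ∞. -/
/-! Choose `d₀ < d₁ < ⋯` one at a time from a shrinking FS-set, the pool, such that `dₙ + x` lies
in the previous pool for every `x` in the next one. At stage `n`, Hindman's theorem shrinks the
pool so that each of the at most `2ⁿ⁺¹` maps `x ↦ φ (x + s)`, `s` a subset sum of `d₀, …, dₙ`, is
either constant on it or only takes values `y` with `8ⁿ⁺¹ ≤ y + 1`. A constant value not seen
before is large for the previous stage, so stage `m` contributes at most `2 ^ (m + 2)` values of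
`φ` on `FS D`, all with `8 ^ m ≤ y + 1`, and `∑ 1 / (y + 1) ≤ ∑ₘ 4 ^ (1 - m)`. -/

namespace Hindman

variable {M : Type*} [AddSemigroup M]

theorem exists_FS_subset_forall_eq {α : Type*} (a : Stream' M) (c : M → α)
    (hc : (c '' FS a).Finite) : ∃ b : Stream' M, FS b ⊆ FS a ∧ ∃ i, ∀ x ∈ FS b, c x = i := by
  obtain ⟨_, ⟨i, -, rfl⟩, b, hb⟩ := FS_partition_regular a
    ((fun i => {x | x ∈ FS a ∧ c x = i}) '' (c '' FS a)) (hc.image _)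
    (fun x hx => ⟨_, Set.mem_image_of_mem _ (Set.mem_image_of_mem c hx), hx, rfl⟩)
  exact ⟨b, fun x hx => (hb hx).1, i, fun x hx => (hb hx).2⟩

theorem exists_FS_subset_forall_eq_or_mem {ι β : Type*} [Finite ι] (a : Stream' M)
    (p : ι → M → β) {L : Set β} (hL : Lᶜ.Finite) :
    ∃ b : Stream' M, FS b ⊆ FS a ∧
      ∀ i, (∃ v, ∀ x ∈ FS b, p i x = v) ∨ ∀ x ∈ FS b, p i x ∈ L := by
  classical
  let c : M → ι → Option β := fun x i => if p i x ∈ L then none else some (p i x)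
  have hc : (c '' FS a).Finite := by
    refine (Set.Finite.pi fun _ => ((hL.image some).insert none)).subset ?_
    rintro _ ⟨x, -, rfl⟩ i -
    by_cases h : p i x ∈ L <;> simp [c, h]
  obtain ⟨b, hba, f, hf⟩ := exists_FS_subset_forall_eq a c hc
  refine ⟨b, hba, fun i => ?_⟩
  cases hfi : f i with
  | none =>
    refine .inr fun x hx => ?_
    have := congrFun (hf x hx) i
    by_contra h
    simp [c, h, hfi] at this
  | some v =>
    refine .inl ⟨v, fun x hx => ?_⟩
    have := congrFun (hf x hx) i
    by_cases h : p i x ∈ L <;> simp_all [c]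

theorem pos_of_mem_FS {a : Stream' ℕ} (ha : ∀ i, 0 < a.get i) {x : ℕ} (hx : x ∈ FS a) :
    0 < x := by
  induction hx with
  | head' a => exact ha 0
  | tail' a m _ ih => exact ih fun i => ha (i + 1)
  | cons' a m _ _ => exact Nat.add_pos_left (ha 0) m

theorem exists_gt_mem_FS_add {a : Stream' ℕ} (ha : ∀ x ∈ FS a, 0 < x) (N : ℕ) :
    ∃ d ∈ FS a, N < d ∧ ∃ k, ∀ y ∈ FS (a.drop k), d + y ∈ FS a := by
  have hd := FS.finsetSum a (Finset.range (N + 1)) Finset.nonempty_range_add_one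
  refine ⟨_, hd, ?_, FS.add hd⟩
  calc N < ∑ _i ∈ Finset.range (N + 1), 1 := by simp
    _ ≤ ∑ i ∈ Finset.range (N + 1), a.get i :=
      Finset.sum_le_sum fun i _ => ha _ (FS.singleton a i)

end Hindman

theorem summable_subtype_of_subset_iUnion_finset {ι β : Type*} {f : β → ℝ} (hf : 0 ≤ f)
    {G : ι → Finset β} (hG : Summable fun i => ∑ v ∈ G i, f v) {A : Set β}
    (hA : A ⊆ ⋃ i, ↑(G i)) : Summable fun a : A => f a := by
  have hsigma : Summable fun q : Σ i, G i => f q.2 := by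
    refine (summable_sigma_of_nonneg fun _ => hf _).mpr ⟨fun _ => .of_finite, ?_⟩
    simpa only [Finset.tsum_subtype] using hG
  choose i hi using fun a : A => Set.mem_iUnion.mp (hA a.2)
  exact hsigma.comp_injective (i := fun a => ⟨i a, a, hi a⟩) fun a b h =>
    Subtype.ext (congrArg (fun q : Σ i, G i => (q.2 : β)) h)

namespace SummableHindman

open Finset

def subsetSums (D : Finset ℕ) : Finset ℕ := D.powerset.image fun F => F.sum id

theorem sum_mem_subsetSums {D F : Finset ℕ} (h : F ⊆ D) : F.sum id ∈ subsetSums D :=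
  mem_image_of_mem _ (mem_powerset.mpr h)

theorem card_subsetSums_le (D : Finset ℕ) : #(subsetSums D) ≤ 2 ^ #D :=
  card_image_le.trans (card_powerset D).le

theorem subsetSums_insert {d : ℕ} {D : Finset ℕ} (hd : d ∉ D) :
    subsetSums (insert d D) = subsetSums D ∪ (subsetSums D).image (d + ·) := by
  rw [subsetSums, powerset_insert, image_union, image_image, subsetSums, image_image]
  congr 1
  refine image_congr fun F hF => ?_
  exact sum_insert fun h => hd (mem_powerset.mp hF h)

def largeValues (n : ℕ) : Set ℕ := {v | 8 ^ n ≤ v + 1}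

instance (n : ℕ) : DecidablePred (· ∈ largeValues n) :=
  fun v => inferInstanceAs (Decidable (8 ^ n ≤ v + 1))

theorem finite_compl_largeValues (n : ℕ) : (largeValues n)ᶜ.Finite :=
  (Set.finite_Iio (8 ^ n)).subset fun v hv => by
    simp only [largeValues, Set.mem_compl_iff, Set.mem_ofPred_eq, not_le] at hv
    exact Set.mem_Iio.mpr (by omega)

theorem inSummable_of_subset_iUnion {G : ℕ → Finset ℕ} (hG : ∀ m, ↑(G m) ⊆ largeValues m)
    (hcard : ∀ m, #(G m) ≤ 2 ^ (m + 2)) {A : Set ℕ} (hA : A ⊆ ⋃ m, ↑(G m)) : InSummable A := by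
  refine summable_subtype_of_subset_iUnion_finset (f := fun v : ℕ => (1 : ℝ) / (v + 1))
    (fun v => by positivity) ?_ hA
  have hgeom := (summable_geometric_of_lt_one (r := 1 / 4) (by norm_num) (by norm_num)).mul_left 4
  refine hgeom.of_nonneg_of_le (fun m => sum_nonneg fun v _ => by positivity) fun m => ?_
  have hv : ∀ v ∈ G m, (1 : ℝ) / (v + 1) ≤ (1 / 8) ^ m := by
    intro v hv
    rw [one_div_pow]
    exact one_div_le_one_div_of_le (by positivity) (by exact_mod_cast hG m hv)
  calc ∑ v ∈ G m, (1 : ℝ) / (v + 1) ≤ #(G m) * (1 / 8) ^ m := by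
        simpa using sum_le_card_nsmul _ _ _ hv
    _ ≤ 2 ^ (m + 2) * (1 / 8) ^ m := by gcongr; exact_mod_cast hcard m
    _ = 4 * (1 / 4) ^ m := by rw [pow_add, mul_right_comm, ← mul_pow]; norm_num; ring

variable (φ : ℕ → ℕ)

/-- The pool supplies the later elements of `D`; `T` holds the values of `φ` fixed at earlier
stages. -/
structure State where
  pool : Stream' ℕ
  D : Finset ℕ
  T : Finset ℕ
  pos_of_mem_pool : ∀ x ∈ Hindman.FS pool, 0 < x
  mem_T_or_large : ∀ s ∈ subsetSums D, ∀ x ∈ Hindman.FS pool,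
    φ (x + s) ∈ T ∨ φ (x + s) ∈ largeValues #D

variable {φ}

structure IsSuccessor (σ τ : State φ) (d : ℕ) (E : Finset ℕ) : Prop where
  D_eq : τ.D = insert d σ.D
  T_eq : τ.T = σ.T ∪ E
  lt_of_mem : ∀ e ∈ σ.D, e < d
  mem_pool : d ∈ Hindman.FS σ.pool
  subset_largeValues : ↑E ⊆ largeValues #σ.D
  card_le : #E ≤ 2 ^ (#σ.D + 1)

theorem State.exists_isSuccessor (σ : State φ) : ∃ d E, ∃ τ : State φ, IsSuccessor σ τ d E := by
  classical
  obtain ⟨d, hd, hDd, k, hadd⟩ := Hindman.exists_gt_mem_FS_add σ.pos_of_mem_pool (σ.D.sup id)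
  have hlt : ∀ e ∈ σ.D, e < d := fun e he => (le_sup (f := id) he).trans_lt hDd
  have hdD : d ∉ σ.D := fun h => (hlt d h).false
  have hdrop := Hindman.FS_iter_tail_sub_FS σ.pool k
  set S := subsetSums (insert d σ.D) with hS
  -- a shift `d + t` of a point `y` of the new pool is the shift `t` of the old pool point `d + y`
  have hold : ∀ s ∈ S, ∀ y ∈ Hindman.FS (σ.pool.drop k),
      φ (y + s) ∈ σ.T ∨ φ (y + s) ∈ largeValues #σ.D := by
    intro s hs y hy
    rw [hS, subsetSums_insert hdD, mem_union] at hs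
    rcases hs with hs | hs
    · exact σ.mem_T_or_large s hs y (hdrop hy)
    · obtain ⟨t, ht, rfl⟩ := mem_image.mp hs
      rw [← add_assoc, add_comm y d]
      exact σ.mem_T_or_large t ht _ (hadd y hy)
  obtain ⟨b, hb, hconst⟩ := Hindman.exists_FS_subset_forall_eq_or_mem (σ.pool.drop k)
    (fun s : S => fun x => φ (x + s)) (finite_compl_largeValues (#σ.D + 1))
  set E := (S.image fun s => φ (b.head + s)).filter (· ∉ σ.T)
  have hcard : #(insert d σ.D) = #σ.D + 1 := card_insert_of_notMem hdD
  refine ⟨d, E, ⟨b, insert d σ.D, σ.T ∪ E, fun x hx => σ.pos_of_mem_pool x (hdrop (hb hx)), ?_⟩,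
    rfl, rfl, hlt, hd, ?_, ?_⟩
  · intro s hs x hx
    rw [hcard]
    rcases hconst ⟨s, hs⟩ with ⟨v, hv⟩ | hlarge
    · left
      rw [hv x hx, ← hv _ (Hindman.FS.head b)]
      by_cases hT : φ (b.head + s) ∈ σ.T
      · exact mem_union_left _ hT
      · exact mem_union_right _ (mem_filter.mpr ⟨mem_image_of_mem _ hs, hT⟩)
    · exact .inr (hlarge x hx)
  · intro v hv
    obtain ⟨hv, hvT⟩ := mem_filter.mp hv
    obtain ⟨s, hs, rfl⟩ := mem_image.mp hv
    exact (hold s hs _ (hb (Hindman.FS.head b))).resolve_left hvT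
  · calc #E ≤ #S := card_filter_le _ _ |>.trans card_image_le
      _ ≤ 2 ^ (#σ.D + 1) := hcard ▸ card_subsetSums_le _

variable (φ) in
def State.init : State φ where
  pool := fun n => n + 1
  D := ∅
  T := ∅
  pos_of_mem_pool _ := Hindman.pos_of_mem_FS fun i => i.succ_pos
  mem_T_or_large _ _ x _ := .inr (by simp [largeValues])

noncomputable def State.next (σ : State φ) : State φ :=
  σ.exists_isSuccessor.choose_spec.choose_spec.choose

noncomputable def State.newElem (σ : State φ) : ℕ := σ.exists_isSuccessor.choose

noncomputable def State.newValues (σ : State φ) : Finset ℕ :=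
  σ.exists_isSuccessor.choose_spec.choose

theorem State.isSuccessor_next (σ : State φ) : IsSuccessor σ σ.next σ.newElem σ.newValues :=
  σ.exists_isSuccessor.choose_spec.choose_spec.choose_spec

variable (φ)

noncomputable def stage : ℕ → State φ
  | 0 => State.init φ
  | n + 1 => (stage n).next

theorem stage_D (m : ℕ) : (stage φ m).D = (range m).image fun k => (stage φ k).newElem := by
  induction m with
  | zero => rfl
  | succ m ih => rw [stage, (stage φ m).isSuccessor_next.D_eq, ih, range_add_one, image_insert]

theorem stage_T (m : ℕ) : (stage φ m).T = (range m).biUnion fun k => (stage φ k).newValues := by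
  induction m with
  | zero => rfl
  | succ m ih =>
    rw [stage, (stage φ m).isSuccessor_next.T_eq, ih, range_add_one, biUnion_insert, union_comm]

theorem strictMono_newElem : StrictMono fun m => (stage φ m).newElem := by
  refine strictMono_nat_of_lt_succ fun m => (stage φ (m + 1)).isSuccessor_next.lt_of_mem _ ?_
  rw [stage, (stage φ m).isSuccessor_next.D_eq]
  exact mem_insert_self _ _

theorem card_stage_D (m : ℕ) : #(stage φ m).D = m := by
  rw [stage_D, card_image_of_injective _ (strictMono_newElem φ).injective, card_range]

noncomputable def stageValues (m : ℕ) : Finset ℕ :=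
  (stage φ m).newValues ∪ ((subsetSums (stage φ m).D).image fun s =>
    φ ((stage φ m).newElem + s)).filter (· ∈ largeValues m)

theorem stageValues_subset_largeValues (m : ℕ) : ↑(stageValues φ m) ⊆ largeValues m := by
  intro v hv
  rcases mem_union.mp hv with hv | hv
  · simpa [card_stage_D] using (stage φ m).isSuccessor_next.subset_largeValues hv
  · exact (mem_filter.mp hv).2

theorem card_stageValues_le (m : ℕ) : #(stageValues φ m) ≤ 2 ^ (m + 2) := by
  have hE := (stage φ m).isSuccessor_next.card_le
  have hW := card_subsetSums_le (stage φ m).D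
  rw [card_stage_D] at hE hW
  calc #(stageValues φ m) ≤ 2 ^ (m + 1) + 2 ^ m :=
        (card_union_le _ _).trans (add_le_add hE ((card_filter_le _ _).trans
          (card_image_le.trans hW)))
    _ ≤ 2 ^ (m + 2) := by rw [pow_succ, pow_succ, pow_succ]; omega

theorem image_FS_subset_iUnion_stageValues :
    φ '' FS (Set.range fun m => (stage φ m).newElem) ⊆ ⋃ m, ↑(stageValues φ m) := by
  rintro _ ⟨_, ⟨F, hne, hF, rfl⟩, rfl⟩
  obtain ⟨m, hm : (stage φ m).newElem = F.max' hne⟩ := hF (F.max'_mem hne)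
  set d := (stage φ m).newElem
  have hrest : F.erase d ⊆ (stage φ m).D := by
    intro e he
    obtain ⟨hed, heF⟩ := mem_erase.mp he
    obtain ⟨k, rfl⟩ := hF heF
    rw [stage_D]
    refine mem_image_of_mem _ (mem_range.mpr ((strictMono_newElem φ).lt_iff_lt.mp ?_))
    exact lt_of_le_of_ne ((F.le_max' _ heF).trans_eq hm.symm) hed
  have hs := sum_mem_subsetSums hrest
  rw [← add_sum_erase F id (hm ▸ F.max'_mem hne), Set.mem_iUnion]
  rcases (stage φ m).mem_T_or_large _ hs d (stage φ m).isSuccessor_next.mem_pool with hT | hL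
  · rw [stage_T] at hT
    obtain ⟨k, -, hk⟩ := mem_biUnion.mp hT
    exact ⟨k, mem_union_left _ hk⟩
  · rw [card_stage_D] at hL
    exact ⟨m, mem_union_right _ (mem_filter.mpr ⟨mem_image_of_mem _ hs, hL⟩)⟩

end SummableHindman

open SummableHindman in
theorem summable_not_katetov_below_hindman :
    ∀ φ : ℕ → ℕ, ∃ D : Set ℕ, D.Infinite ∧ InSummable (φ '' FS D) := fun φ =>
  ⟨_, Set.infinite_range_of_injective (strictMono_newElem φ).injective,
    inSummable_of_subset_iUnion (stageValues_subset_largeValues φ) (card_stageValues_le φ)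
      (image_FS_subset_iUnion_stageValues φ)⟩
end

section
/- The summable ideal is not Katětov below the Ramsey ideal: for every function φ : [ℕ]² → ℕ there exists an infinite set H ⊆ ℕ such that ∑_{y ∈ φ[[H]²]} 1/(y+1) < ∞. -/
open Filter Set

theorem InSummable.mono {A B : Set ℕ} (hB : InSummable B) (h : A ⊆ B) : InSummable A :=
  (hB.comp_injective (inclusion_injective h) :)

theorem InSummable.union {A B : Set ℕ} (hA : InSummable A) (hB : InSummable B) :
    InSummable (A ∪ B) := by
  have := HasSum.add_disjoint (f := fun n : ℕ => (1 : ℝ) / (n + 1)) disjoint_sdiff_right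
    (Summable.hasSum hA) (Summable.hasSum (hB.mono sdiff_subset))
  rw [union_sdiff_self] at this
  exact this.summable

theorem Set.Finite.inSummable {A : Set ℕ} (hA : A.Finite) : InSummable A :=
  hA.summable (fun n : ℕ => (1 : ℝ) / (n + 1))

theorem inSummable_of_four_pow_le (W : ℕ → ℕ → ℕ) {A : Set ℕ}
    (hA : ∀ n ∈ A, ∃ k l, k ≤ l ∧ W k l = n ∧ 4 ^ l ≤ n) : InSummable A := by
  choose k l hkl hW hle using hA
  have hinj : Function.Injective fun n : A => (k n n.2, l n n.2) := by
    intro a b hab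
    simp only [Prod.mk.injEq] at hab
    ext
    rw [← hW a a.2, ← hW b b.2, hab.1, hab.2]
  have hgeom : Summable fun p : ℕ × ℕ => (1 / 2 : ℝ) ^ p.1 * (1 / 2) ^ p.2 :=
    summable_geometric_two.mul_of_nonneg summable_geometric_two (fun _ => by positivity)
      fun _ => by positivity
  refine .of_nonneg_of_le (fun _ => by positivity) (fun n => ?_) (hgeom.comp_injective hinj)
  obtain ⟨n, hn⟩ := n
  have h4 : (4 : ℝ) ^ l n hn ≤ n := by exact_mod_cast hle n hn
  calc (1 : ℝ) / (n + 1) ≤ 1 / 4 ^ l n hn := by gcongr; linarith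
    _ = (1 / 2) ^ l n hn * (1 / 2) ^ l n hn := by rw [← mul_pow, ← one_div_pow]; norm_num
    _ ≤ (1 / 2) ^ k n hn * (1 / 2) ^ l n hn := by
      gcongr ?_ * _
      exact pow_le_pow_of_le_one (by norm_num) (by norm_num) (hkl n hn)

theorem exists_strictMono_const_or_le (f B : ℕ → ℕ) :
    ∃ ψ : ℕ → ℕ, StrictMono ψ ∧ ((∀ k, f (ψ k) = f (ψ 0)) ∨ ∀ k, B k ≤ f (ψ k)) := by
  by_cases hc : ∃ c, ∃ᶠ n in atTop, f n = c
  · obtain ⟨c, hc⟩ := hc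
    obtain ⟨ψ, hψ, hf⟩ := extraction_of_frequently_atTop hc
    exact ⟨ψ, hψ, .inl fun k => (hf k).trans (hf 0).symm⟩
  · simp only [not_exists, not_frequently] at hc
    have hlarge : ∀ b, ∀ᶠ n in atTop, b ≤ f n := fun b => by
      filter_upwards [(Finset.range b).eventually_all.2 fun c _ => hc c] with n hn
      by_contra hlt
      exact hn (f n) (Finset.mem_range.2 (not_le.1 hlt)) rfl
    obtain ⟨ψ, hψ, hf⟩ := extraction_forall_of_frequently fun k => (hlarge (B k)).frequently
    exact ⟨ψ, hψ, .inr hf⟩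

theorem exists_strictMono_forall_lt_eq_or_le (f : ℕ → ℕ → ℕ) {B : ℕ → ℕ}
    (hB : Monotone B) : ∃ h c : ℕ → ℕ, StrictMono h ∧
      ∀ i j, i < j → f (h i) (h j) = c i ∨ B j ≤ f (h i) (h j) := by
  -- `σ (n + 1)` thins the tail of `σ n` so that the colours against the head `σ n 0` are
  -- constant or large; the head of `σ j` sits at position `≥ j - i - 1` of `σ (i + 1)`,
  -- whence the shift in the bound `B (k + n + 1)`.
  choose ψ hψ hdich using fun (n : ℕ) (σ : ℕ → ℕ) =>
    exists_strictMono_const_or_le (fun m => f (σ 0) (σ (m + 1))) (fun k => B (k + n + 1))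
  obtain ⟨σ, hσ_zero, hσ_succ⟩ : ∃ σ : ℕ → ℕ → ℕ,
      σ 0 = id ∧ ∀ n k, σ (n + 1) k = σ n (ψ n (σ n) k + 1) :=
    ⟨fun n => Nat.rec (motive := fun _ => ℕ → ℕ) id (fun n σn k => σn (ψ n σn k + 1)) n,
      rfl, fun _ _ => rfl⟩
  have hσ_mono : ∀ n, StrictMono (σ n) := by
    intro n
    induction n with
    | zero => exact hσ_zero ▸ strictMono_id
    | succ n ih =>
      intro a b hab
      rw [hσ_succ, hσ_succ]
      exact ih (Nat.succ_lt_succ (hψ n (σ n) hab))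
  have hσ_deep : ∀ n d k, ∃ m, k + d ≤ m ∧ σ (n + d) k = σ n m := by
    intro n d
    induction d with
    | zero => exact fun k => ⟨k, le_rfl, rfl⟩
    | succ d ih =>
      intro k
      obtain ⟨m, hm, hσm⟩ := ih (ψ (n + d) (σ (n + d)) k + 1)
      have := (hψ (n + d) (σ (n + d))).le_apply (x := k)
      exact ⟨m, by omega, by rw [← add_assoc, hσ_succ, hσm]⟩
  refine ⟨fun n => σ n 0, fun i => f (σ i 0) (σ (i + 1) 0),
    strictMono_nat_of_lt_succ fun n => ?_, fun i j hij => ?_⟩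
  · rw [hσ_succ]
    exact hσ_mono n (Nat.succ_pos _)
  · obtain ⟨m, hm, hσm⟩ := hσ_deep (i + 1) (j - i - 1) 0
    rw [show i + 1 + (j - i - 1) = j by omega] at hσm
    simp only [hσm, hσ_succ]
    rcases hdich i (σ i) with hconst | hlarge
    · exact .inl (hconst m)
    · exact .inr ((hB (by omega)).trans (hlarge m))

theorem exists_lt_eq_of_mem_pairsOf_range {e : ℕ → ℕ} {p : Sym2 ℕ}
    (hp : p ∈ pairsOf (range e)) : ∃ k l, k < l ∧ p = s(e k, e l) := by
  obtain ⟨_, _, hab, ⟨k, rfl⟩, ⟨l, rfl⟩, rfl⟩ := hp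
  rcases lt_or_gt_of_ne (ne_of_apply_ne e hab) with hkl | hlk
  · exact ⟨k, l, hkl, rfl⟩
  · exact ⟨l, k, hlk, Sym2.eq_swap⟩

theorem summable_not_katetov_below_ramsey :
    ∀ φ : Sym2 ℕ → ℕ, ∃ H : Set ℕ, H.Infinite ∧ InSummable (φ '' pairsOf H) := by
  intro φ
  obtain ⟨h, c, hh, hpair⟩ := exists_strictMono_forall_lt_eq_or_le (fun a b => φ s(a, b))
    (pow_right_mono₀ (a := 4) (by norm_num))
  obtain ⟨t, ht, hc⟩ := exists_strictMono_const_or_le c (4 ^ ·)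
  set e := h ∘ t
  refine ⟨range e, infinite_range_of_injective (hh.comp ht).injective, ?_⟩
  have hvalues : φ '' pairsOf (range e) ⊆
      range (c ∘ t) ∪ {n | ∃ k l, k ≤ l ∧ φ s(e k, e l) = n ∧ 4 ^ l ≤ n} := by
    rintro _ ⟨p, hp, rfl⟩
    obtain ⟨k, l, hkl, rfl⟩ := exists_lt_eq_of_mem_pairsOf_range hp
    rcases hpair (t k) (t l) (ht hkl) with hconst | hlarge
    · exact .inl ⟨k, hconst.symm⟩
    · exact .inr ⟨k, l, hkl.le, rfl,
        (Nat.pow_le_pow_right (by norm_num) ht.le_apply).trans hlarge⟩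
  refine (InSummable.union ?_ (inSummable_of_four_pow_le _ fun n hn => hn)).mono hvalues
  rcases hc with hconst | hlarge
  · exact (finite_singleton (c (t 0))).inSummable.mono (range_subset_iff.2 hconst)
  · exact inSummable_of_four_pow_le (fun _ l => c (t l))
      fun _ ⟨k, hk⟩ => ⟨k, k, le_rfl, hk, hk ▸ hlarge k⟩
end

section
/- Canonical Ramsey reduction to the summable ideal, injective case: if T ⊆ ℕ is infinite and φ : [ℕ]² → ℕ is injective on [T]², then there is an infinite H ⊆ T with ∑_{y ∈ φ[[H]²]} 1/(y+1) < ∞. -/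
/-!
Choose `h₀ < h₁ < ⋯` in `T` one at a time so that `φ {hₘ, hₙ} ≥ 4 ⁿ` for all `m < n`. This is
possible because, for fixed `a ∈ T`, injectivity makes `t ↦ φ {a, t}` take each of the values
below `4 ⁿ` at most once, so all but finitely many `t ∈ T` are admissible. Indexing each value
`y = φ {hᵢ, hⱼ}`, `i < j`, by the pair `(i, j)` then bounds `1 / (y + 1)` by `2 ^ (-i) * 2 ^ (-j)`,
which is summable over `ℕ × ℕ`.
-/

open Filter

theorem exists_strictMono_forall_lt_of_eventually {Q : ℕ → Prop} {P : ℕ → ℕ → ℕ → Prop}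
    (hQ : ∃ᶠ t in atTop, Q t) (hP : ∀ n a, ∀ᶠ t in atTop, P n a t) :
    ∃ s : ℕ → ℕ, StrictMono s ∧ (∀ n, Q (s n)) ∧ ∀ m n, m < n → P n (s m) (s n) := by
  have step : ∀ (F : Finset ℕ) (n : ℕ), ∃ t, Q t ∧ (∀ a ∈ F, a < t) ∧ ∀ a ∈ F, P n a t :=
    fun F n => (hQ.and_eventually
      (((eventually_all_finset F).2 fun a _ => eventually_gt_atTop a).and
        ((eventually_all_finset F).2 fun a _ => hP n a))).exists
  choose next hnextQ hnext_gt hnextP using step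
  -- `pref n = {s 0, …, s (n - 1)}` for the sequence `s n = next (pref n) n`
  let pref : ℕ → Finset ℕ := fun n => Nat.rec ∅ (fun k F => insert (next F k) F) n
  have mem_pref : ∀ {m n}, m < n → next (pref m) m ∈ pref n := by
    intro m n hmn
    induction hmn with
    | refl => exact Finset.mem_insert_self _ _
    | step _ ih => exact Finset.mem_insert_of_mem ih
  exact ⟨fun n => next (pref n) n, fun m n hmn => hnext_gt _ _ _ (mem_pref hmn),
    fun n => hnextQ _ _, fun m n hmn => hnextP _ _ _ (mem_pref hmn)⟩

theorem eventually_le_apply_mk_of_injOn_pairsOf {T : Set ℕ} {φ : Sym2 ℕ → ℕ}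
    (hinj : ∀ p ∈ pairsOf T, ∀ q ∈ pairsOf T, φ p = φ q → p = q) {a : ℕ} (ha : a ∈ T)
    (B : ℕ) : ∀ᶠ t in atTop, t ∈ T → t ≠ a → B ≤ φ s(a, t) := by
  rw [← Nat.cofinite_eq_atTop, eventually_cofinite]
  simp only [Classical.not_imp, not_le]
  have hinjOn : Set.InjOn (fun t => φ s(a, t)) {t | t ∈ T ∧ t ≠ a ∧ φ s(a, t) < B} := by
    rintro t₁ ⟨ht₁, hne₁, -⟩ t₂ ⟨ht₂, hne₂, -⟩ h
    have hpair := hinj _ ⟨a, t₁, hne₁.symm, ha, ht₁, rfl⟩ _ ⟨a, t₂, hne₂.symm, ha, ht₂, rfl⟩ h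
    rcases Sym2.eq_iff.1 hpair with ⟨-, h₁₂⟩ | ⟨rfl, rfl⟩
    exacts [h₁₂, rfl]
  refine Set.Finite.of_finite_image ((Set.finite_Iio B).subset ?_) hinjOn
  rintro _ ⟨t, ⟨-, -, hlt⟩, rfl⟩
  exact hlt

theorem summable_one_div_add_one_of_injective {A : Set ℕ} (e : A → ℕ × ℕ)
    (he : Function.Injective e) (hle : ∀ y, 2 ^ ((e y).1 + (e y).2) ≤ (y : ℕ) + 1) :
    Summable fun y : A => (1 : ℝ) / ((y : ℕ) + 1) := by
  have hgeom : Summable fun p : ℕ × ℕ => (1 / 2 : ℝ) ^ p.1 * (1 / 2 : ℝ) ^ p.2 :=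
    summable_geometric_two.mul_of_nonneg summable_geometric_two
      (fun _ => by positivity) (fun _ => by positivity)
  refine (hgeom.comp_injective he).of_nonneg_of_le (fun _ => by positivity) fun y => ?_
  have hleR : (2 : ℝ) ^ ((e y).1 + (e y).2) ≤ (y : ℕ) + 1 := by exact_mod_cast hle y
  calc (1 : ℝ) / ((y : ℕ) + 1) ≤ 1 / 2 ^ ((e y).1 + (e y).2) :=
        one_div_le_one_div_of_le (by positivity) hleR
    _ = (1 / 2 : ℝ) ^ (e y).1 * (1 / 2 : ℝ) ^ (e y).2 := by
        rw [pow_add, one_div_pow, one_div_pow, one_div_mul_one_div]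

theorem inSummable_image_pairsOf_range {φ : Sym2 ℕ → ℕ} {s : ℕ → ℕ}
    (hs : ∀ m n, m < n → 4 ^ n ≤ φ s(s m, s n)) : InSummable (φ '' pairsOf (Set.range s)) := by
  have index : ∀ y : ↥(φ '' pairsOf (Set.range s)),
      ∃ i j, i < j ∧ φ s(s i, s j) = (y : ℕ) := by
    rintro ⟨_, _, ⟨_, _, hab, ⟨m, rfl⟩, ⟨n, rfl⟩, rfl⟩, rfl⟩
    rcases lt_or_gt_of_ne (ne_of_apply_ne s hab) with h | h
    · exact ⟨m, n, h, rfl⟩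
    · exact ⟨n, m, h, by rw [Sym2.eq_swap]⟩
  choose i j hij hφ using index
  refine summable_one_div_add_one_of_injective (fun y => (i y, j y)) (fun y y' h => ?_) fun y => ?_
  · simp only [Prod.mk.injEq] at h
    exact Subtype.ext (by rw [← hφ, ← hφ, h.1, h.2])
  · calc 2 ^ (i y + j y) ≤ 2 ^ (2 * j y) := Nat.pow_le_pow_right two_pos (by linarith [hij y])
      _ = 4 ^ j y := by rw [pow_mul]; norm_num
      _ ≤ (y : ℕ) + 1 := (hφ y ▸ hs _ _ (hij y)).trans (Nat.le_succ _)

theorem canonical_ramsey_injective_case (T : Set ℕ) (hT : T.Infinite)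
    (φ : Sym2 ℕ → ℕ)
    (hinj : ∀ p ∈ pairsOf T, ∀ q ∈ pairsOf T, φ p = φ q → p = q) :
    ∃ H : Set ℕ, H ⊆ T ∧ H.Infinite ∧ InSummable (φ '' pairsOf H) := by
  obtain ⟨s, hs_mono, hsT, hsφ⟩ :=
    exists_strictMono_forall_lt_of_eventually (Q := (· ∈ T))
      (P := fun n a t => a ∈ T → t ∈ T → t ≠ a → 4 ^ n ≤ φ s(a, t))
      (Nat.frequently_atTop_iff_infinite.2 hT)
      fun n a => eventually_imp_distrib_left.2 fun ha =>
        eventually_le_apply_mk_of_injOn_pairsOf hinj ha (4 ^ n)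
  refine ⟨Set.range s, Set.range_subset_iff.2 hsT,
    Set.infinite_range_of_injective hs_mono.injective, inSummable_image_pairsOf_range ?_⟩
  exact fun m n hmn => hsφ m n hmn (hsT m) (hsT n) (hs_mono hmn).ne'
end

section
/- The Ramsey ideal is not Katětov below the Hindman ideal: there is no function f : ℕ → [ℕ]² such that f⁻¹[A] belongs to the Hindman ideal for every A in the Ramsey ideal. -/
/-!
Fix an idempotent ultrafilter `U` on `ℕ` containing all cofinite sets, and write `a n ≤ b n` for
the two entries of `f n`. Build an infinite set `B` one element at a time, each new element `y`
chosen `U`-generically after the finite set `S` of its predecessors: for every sum `s` of a subset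
of `S` and `g ∈ {a, b}`, `g (s + y)` is the `U`-limit of `g (s + ·)` if that limit exists, and
exceeds every value met so far otherwise. Idempotence of `U` makes the new sums `s + y` inherit
these alternatives, so on `FS B` the map `a` is constant, or determined by the largest summand, or
(off singletons) by the `U`-limit of `a` at the smallest summand; similarly for `b`. In each case
a clique `[H]² ⊆ f '' FS B` with `H` infinite is impossible: either some vertex of `H` has only
finitely many larger neighbours, or all of `H` is a single vertex, or the larger end of an edge
would be a limit value of `a`, which the fresh values of `b` never are.
-/

open Filter

attribute [local instance] Ultrafilter.add

namespace RamseyHindman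

lemma pos_of_mem_FS {a : Stream' ℕ} (ha : ∀ n, 0 < a.get n) {m : ℕ}
    (hm : m ∈ Hindman.FS a) : 0 < m := by
  induction hm with
  | head' a => exact ha 0
  | tail' a m _ ih => exact ih fun n => ha (n + 1)
  | cons' a m _ _ => exact Nat.add_pos_left (ha 0) m

lemma exists_idempotent_ultrafilter_le_atTop :
    ∃ U : Ultrafilter ℕ, U + U = U ∧ (U : Filter ℕ) ≤ atTop := by
  obtain ⟨U, hU, hFS⟩ := Hindman.exists_idempotent_ultrafilter_le_FS (Stream'.const 1)
  refine ⟨U, hU, ?_⟩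
  -- the only principal idempotent is `pure 0`, and `0 ∉ FS (const 1)`
  rcases U.le_cofinite_or_eq_pure with h | ⟨m, rfl⟩
  · rwa [← Nat.cofinite_eq_atTop]
  · have hm : 0 < m := pos_of_mem_FS (fun _ => one_pos) hFS
    have hmm : ∀ᶠ k in ((pure m + pure m : Ultrafilter ℕ) : Filter ℕ), k = m := by
      rw [hU]; exact rfl
    have : m + m = m := (Ultrafilter.eventually_add _ _ _).1 hmm
    omega

section Limits

variable {U : Ultrafilter ℕ} {g g' : ℕ → ℕ} {s : ℕ}

def Converges (U : Ultrafilter ℕ) (g : ℕ → ℕ) (s : ℕ) : Prop :=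
  ∃ v, ∀ᶠ y in U, g (s + y) = v

open Classical in
noncomputable def limit (U : Ultrafilter ℕ) (g : ℕ → ℕ) (s : ℕ) : ℕ :=
  if h : Converges U g s then h.choose else 0

def EventuallyDivergent (U : Ultrafilter ℕ) (g : ℕ → ℕ) (s : ℕ) : Prop :=
  ∀ᶠ y in U, ¬ Converges U g (s + y)

lemma Converges.eventually_eq (h : Converges U g s) : ∀ᶠ y in U, g (s + y) = limit U g s := by
  rw [limit, dif_pos h]
  exact h.choose_spec

lemma converges_and_limit_eq {v : ℕ} (h : ∀ᶠ y in U, g (s + y) = v) :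
    Converges U g s ∧ limit U g s = v := by
  have hc : Converges U g s := ⟨v, h⟩
  obtain ⟨y, hy, hy'⟩ := (hc.eventually_eq.and h).exists
  exact ⟨hc, hy.symm.trans hy'⟩

lemma tendsto_atTop_of_not_converges (h : ¬ Converges U g s) :
    Tendsto (fun y => g (s + y)) U atTop := by
  rcases (U.map fun y => g (s + y)).le_cofinite_or_eq_pure with h' | ⟨v, hv⟩
  · rwa [← Nat.cofinite_eq_atTop]
  · refine absurd ⟨v, ?_⟩ h
    have : ∀ᶠ k in (U.map fun y => g (s + y) : Filter ℕ), k = v := by rw [hv]; exact rfl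
    exact this

lemma eventually_converges_of_not_eventuallyDivergent (h : ¬ EventuallyDivergent U g 0) :
    ∀ᶠ y in U, Converges U g y := by
  rw [EventuallyDivergent, Ultrafilter.eventually_not, not_not] at h
  simpa only [zero_add] using h

variable (hU : U + U = U)
include hU

lemma eventually_iff_eventually_eventually_add {p : ℕ → Prop} :
    (∀ᶠ y in U, p y) ↔ ∀ᶠ y in U, ∀ᶠ z in U, p (y + z) :=
  calc (∀ᶠ y in U, p y) ↔ ∀ᶠ y in ((U + U : Ultrafilter ℕ) : Filter ℕ), p y := by
        rw [hU]
    _ ↔ _ := Ultrafilter.eventually_add U U p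

lemma Converges.eventually (h : Converges U g s) :
    ∀ᶠ y in U, g (s + y) = limit U g s ∧ Converges U g (s + y) ∧
      limit U g (s + y) = limit U g s := by
  filter_upwards [h.eventually_eq, (eventually_iff_eventually_eventually_add hU).1 h.eventually_eq]
    with y hy hyz
  exact ⟨hy, converges_and_limit_eq (by simpa only [add_assoc] using hyz)⟩

lemma EventuallyDivergent.not_converges (h : EventuallyDivergent U g s) : ¬ Converges U g s :=
  fun hc => ((hc.eventually hU).and h).exists.elim fun _ hy => hy.2 hy.1.2.1

lemma EventuallyDivergent.eventually (h : EventuallyDivergent U g s) :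
    ∀ᶠ y in U, EventuallyDivergent U g (s + y) := by
  simpa only [EventuallyDivergent, add_assoc] using
    (eventually_iff_eventually_eventually_add hU).1 h

lemma eventually_lt_limit (h : ¬ Converges U g s) (N : ℕ) :
    ∀ᶠ y in U, Converges U g (s + y) → N < limit U g (s + y) := by
  by_contra hc
  rw [← Ultrafilter.eventually_not] at hc
  have hle : ∀ᶠ y in U, ∀ᶠ z in U, g (s + (y + z)) ≤ N := by
    filter_upwards [hc] with y hy
    push Not at hy
    filter_upwards [hy.1.eventually_eq] with z hz
    rw [← add_assoc, hz]
    exact hy.2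
  have hle' := (eventually_iff_eventually_eventually_add hU (p := fun w => g (s + w) ≤ N)).2 hle
  obtain ⟨y, hy, hy'⟩ :=
    (hle'.and ((tendsto_atTop_of_not_converges h).eventually_gt_atTop N)).exists
  omega

/-- If `g' (s + y)` were `U`-often the limit of `g` at `y`, then, since `g` keeps its limit along
`y + z`, `g' (s + y + ·)` would converge for `U`-many `y`. -/
lemma EventuallyDivergent.eventually_ne_limit (h : EventuallyDivergent U g' s) :
    ∀ᶠ y in U, Converges U g y → g' (s + y) ≠ limit U g y := by
  by_contra hc
  rw [← Ultrafilter.eventually_not] at hc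
  push Not at hc
  obtain ⟨y, hyz, hy, hdiv⟩ :=
    (((eventually_iff_eventually_eventually_add hU).1 hc).and (hc.and h)).exists
  refine hdiv ⟨limit U g y, ?_⟩
  filter_upwards [hyz, hy.1.eventually hU] with z hz hlock
  rw [add_assoc, hz.2, hlock.2.2]

end Limits

section Construction

variable {U : Ultrafilter ℕ}

structure GoodShift (U : Ultrafilter ℕ) (g : ℕ → ℕ) (N s y : ℕ) : Prop where
  lock : Converges U g s →
    g (s + y) = limit U g s ∧ Converges U g (s + y) ∧ limit U g (s + y) = limit U g s
  fresh : ¬ Converges U g s → N < g (s + y)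
  divergent : EventuallyDivergent U g s → EventuallyDivergent U g (s + y)

lemma eventually_goodShift (hU : U + U = U) (g : ℕ → ℕ) (N s : ℕ) :
    ∀ᶠ y in U, GoodShift U g N s y := by
  filter_upwards [eventually_imp_distrib_left.2 fun h : Converges U g s => h.eventually hU,
    eventually_imp_distrib_left.2 fun h =>
      (tendsto_atTop_of_not_converges h).eventually_gt_atTop N,
    eventually_imp_distrib_left.2 fun h : EventuallyDivergent U g s => h.eventually hU]
    with y hlock hfresh hdiv
  exact ⟨hlock, hfresh, hdiv⟩

noncomputable def bound (U : Ultrafilter ℕ) (a b : ℕ → ℕ) (S : Finset ℕ) : ℕ :=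
  S.powerset.sup fun T => a (T.sum id) ⊔ b (T.sum id) ⊔ limit U a (T.sum id)

lemma le_bound {a b : ℕ → ℕ} {S T : Finset ℕ} (hT : T ⊆ S) :
    a (T.sum id) ≤ bound U a b S ∧ b (T.sum id) ≤ bound U a b S ∧
      limit U a (T.sum id) ≤ bound U a b S := by
  have := Finset.le_sup (f := fun T => a (T.sum id) ⊔ b (T.sum id) ⊔ limit U a (T.sum id))
    (Finset.mem_powerset.2 hT)
  simp only [sup_le_iff] at this
  exact ⟨this.1.1, this.1.2, this.2⟩

structure GoodSuccessor (U : Ultrafilter ℕ) (a b : ℕ → ℕ) (S : Finset ℕ) (y : ℕ) :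
    Prop where
  lo : ∀ T ⊆ S, GoodShift U a (bound U a b S) (T.sum id) y
  hi : ∀ T ⊆ S, GoodShift U b (bound U a b S) (T.sum id) y
  hi_ne_limit : ∀ T ⊆ S, EventuallyDivergent U b (T.sum id) → Converges U a y →
    b (T.sum id + y) ≠ limit U a y
  limit_fresh : ¬ Converges U a 0 → Converges U a y → bound U a b S < limit U a y
  lo_converges : (∀ᶠ z in U, Converges U a z) → Converges U a y
  hi_converges : (∀ᶠ z in U, Converges U b z) → Converges U b y

lemma eventually_goodSuccessor (hU : U + U = U) (a b : ℕ → ℕ) (S : Finset ℕ) :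
    ∀ᶠ y in U, GoodSuccessor U a b S y := by
  have slots (g : ℕ → ℕ) :
      ∀ᶠ y in U, ∀ T ∈ S.powerset, GoodShift U g (bound U a b S) (T.sum id) y :=
    (eventually_all_finset _).2 fun T _ => eventually_goodShift hU g _ _
  have hhi_ne : ∀ᶠ y in U, ∀ T ∈ S.powerset, EventuallyDivergent U b (T.sum id) →
      Converges U a y → b (T.sum id + y) ≠ limit U a y :=
    (eventually_all_finset _).2 fun T _ =>
      eventually_imp_distrib_left.2 fun h => h.eventually_ne_limit hU
  have hfresh :
      ∀ᶠ y in U, ¬ Converges U a 0 → Converges U a y → bound U a b S < limit U a y :=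
    eventually_imp_distrib_left.2 fun h => by
      simpa only [zero_add] using eventually_lt_limit hU h (bound U a b S)
  filter_upwards [slots a, slots b, hhi_ne, hfresh, eventually_imp_distrib_left.2 id,
    eventually_imp_distrib_left.2 id] with y hlo hhi hne hfresh hlo' hhi'
  exact ⟨fun T hT => hlo T (Finset.mem_powerset.2 hT),
    fun T hT => hhi T (Finset.mem_powerset.2 hT),
    fun T hT => hne T (Finset.mem_powerset.2 hT), hfresh, hlo', hhi'⟩

end Construction

section Below

variable {B : Set ℕ} {T : Finset ℕ} {m m' : ℕ}

open Classical in
noncomputable def below (B : Set ℕ) (m : ℕ) : Finset ℕ :=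
  (Finset.range m).filter (· ∈ B)

lemma mem_below {z : ℕ} : z ∈ below B m ↔ z ∈ B ∧ z < m := by
  simp [below, and_comm]

lemma exists_infinite_forall_below {P : Finset ℕ → ℕ → Prop}
    (h : ∀ S : Finset ℕ, ∃ y, (∀ z ∈ S, z < y) ∧ P S y) :
    ∃ B : Set ℕ, B.Infinite ∧ ∀ m ∈ B, P (below B m) m := by
  choose next hgt hP using h
  let S : ℕ → Finset ℕ := fun n => Nat.rec ∅ (fun _ S => insert (next S) S) n
  let x n := next (S n)
  have hS (n : ℕ) : S n = (Finset.range n).image x := by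
    induction n with
    | zero => rfl
    | succ n ih => rw [Finset.range_add_one, Finset.image_insert, ← ih]
  have hx : StrictMono x := fun i j hij =>
    hgt _ _ (by rw [hS]; exact Finset.mem_image_of_mem _ (Finset.mem_range.2 hij))
  refine ⟨Set.range x, Set.infinite_range_of_injective hx.injective, ?_⟩
  rintro _ ⟨n, rfl⟩
  have : below (Set.range x) (x n) = S n := by
    ext z
    simp only [mem_below, hS, Finset.mem_image, Finset.mem_range]
    constructor
    · rintro ⟨⟨i, rfl⟩, hi⟩
      exact ⟨i, hx.lt_iff_lt.1 hi, rfl⟩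
    · rintro ⟨i, hi, rfl⟩
      exact ⟨⟨i, rfl⟩, hx hi⟩
  rw [this]
  exact hP _

lemma coe_subset_of_subset_below (hT : T ⊆ below B m) : ↑T ⊆ B :=
  fun _ hz => (mem_below.1 (hT hz)).1

lemma sum_insert_below (hT : T ⊆ below B m) : (insert m T).sum id = T.sum id + m := by
  rw [Finset.sum_insert fun hm => (mem_below.1 (hT hm)).2.false, add_comm, id]

lemma insert_subset_below (hm : m ∈ B) (hT : T ⊆ below B m) (h : m < m') :
    insert m T ⊆ below B m' :=
  Finset.insert_subset (mem_below.2 ⟨hm, h⟩) fun _ hz =>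
    have hz := mem_below.1 (hT hz)
    mem_below.2 ⟨hz.1, hz.2.trans h⟩

lemma exists_eq_insert_below (hT : ↑T ⊆ B) (hne : T.Nonempty) :
    ∃ m ∈ B, ∃ T' ⊆ below B m, T = insert m T' := by
  refine ⟨T.max' hne, hT (T.max'_mem hne), T.erase (T.max' hne), fun z hz => ?_,
    (Finset.insert_erase (T.max'_mem hne)).symm⟩
  exact mem_below.2 ⟨hT (Finset.mem_of_mem_erase hz), T.lt_max'_of_mem_erase_max' hne hz⟩

lemma induction_below {p : Finset ℕ → Prop} (h0 : p ∅)
    (step : ∀ m ∈ B, ∀ T ⊆ below B m, p T → p (insert m T)) :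
    ∀ T : Finset ℕ, ↑T ⊆ B → p T := by
  intro T
  induction T using Finset.induction_on_max with
  | empty => exact fun _ => h0
  | insert m T hlt ih =>
    intro hT
    rw [Finset.coe_insert, Set.insert_subset_iff] at hT
    exact step m hT.1 T (fun z hz => mem_below.2 ⟨hT.2 hz, hlt z hz⟩) (ih hT.2)

end Below

section Invariants

variable {U : Ultrafilter ℕ} {g : ℕ → ℕ} {N : ℕ → ℕ} {B : Set ℕ} {T : Finset ℕ}
  {m : ℕ} (hg : ∀ m ∈ B, ∀ T ⊆ below B m, GoodShift U g (N m) (T.sum id) m)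
include hg

lemma converges_sum_of_converges_zero (h0 : Converges U g 0) :
    ∀ T : Finset ℕ, ↑T ⊆ B →
      Converges U g (T.sum id) ∧ limit U g (T.sum id) = limit U g 0 :=
  induction_below ⟨h0, rfl⟩ fun m hm T hT ih => by
    obtain ⟨-, hc, hl⟩ := (hg m hm T hT).lock ih.1
    rw [sum_insert_below hT]
    exact ⟨hc, hl.trans ih.2⟩

lemma eq_limit_zero (h0 : Converges U g 0) (hm : m ∈ B) (hT : T ⊆ below B m) :
    g (T.sum id + m) = limit U g 0 := by
  have ih := converges_sum_of_converges_zero hg h0 T (coe_subset_of_subset_below hT)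
  exact ((hg m hm T hT).lock ih.1).1.trans ih.2

lemma eventuallyDivergent_sum (h0 : EventuallyDivergent U g 0) :
    ∀ T : Finset ℕ, ↑T ⊆ B → EventuallyDivergent U g (T.sum id) :=
  induction_below h0 fun m hm T hT ih => by
    rw [sum_insert_below hT]
    exact (hg m hm T hT).divergent ih

lemma lt_of_eventuallyDivergent_zero (hU : U + U = U) (h0 : EventuallyDivergent U g 0)
    (hm : m ∈ B) (hT : T ⊆ below B m) : N m < g (T.sum id + m) :=
  (hg m hm T hT).fresh <|
    (eventuallyDivergent_sum hg h0 T (coe_subset_of_subset_below hT)).not_converges hU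

lemma converges_sum_of_forall_converges (hconv : ∀ m ∈ B, Converges U g m) :
    ∀ T : Finset ℕ, ↑T ⊆ B → ∀ hne : T.Nonempty,
      Converges U g (T.sum id) ∧ limit U g (T.sum id) = limit U g (T.min' hne) := by
  refine induction_below (by simp) fun m hm T hT ih hne => ?_
  rcases T.eq_empty_or_nonempty with rfl | hT'
  · simpa using hconv m hm
  obtain ⟨-, hc, hl⟩ := (hg m hm T hT).lock (ih hT').1
  have hmin : (insert m T).min' hne = T.min' hT' := by
    rw [Finset.min'_insert m T hT', min_eq_right (mem_below.1 (hT (T.min'_mem hT'))).2.le]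
  rw [sum_insert_below hT, hmin]
  exact ⟨hc, hl.trans (ih hT').2⟩

lemma eq_limit_min' (hconv : ∀ m ∈ B, Converges U g m) (hm : m ∈ B) (hT : T ⊆ below B m)
    (hne : T.Nonempty) : g (T.sum id + m) = limit U g (T.min' hne) := by
  have ih := converges_sum_of_forall_converges hg hconv T (coe_subset_of_subset_below hT) hne
  exact ((hg m hm T hT).lock ih.1).1.trans ih.2

end Invariants

/-- `(h, h') = (a n, b n)` for some `n ∈ FS B`, written as `n = ∑ T + m` with `m` its largest
summand. -/
def Realizes (a b : ℕ → ℕ) (B : Set ℕ) (h h' : ℕ) : Prop :=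
  ∃ m ∈ B, ∃ T ⊆ below B m, a (T.sum id + m) = h ∧ b (T.sum id + m) = h'

lemma realizes_of_pairsOf_subset {f : ℕ → Sym2 ℕ} {B H : Set ℕ}
    (hsub : pairsOf H ⊆ f '' FS B) {h h' : ℕ} (hh : h ∈ H) (hh' : h' ∈ H) (hlt : h < h') :
    Realizes (Sym2.inf ∘ f) (Sym2.sup ∘ f) B h h' := by
  obtain ⟨_, ⟨T, hne, hTB, rfl⟩, hf⟩ := hsub ⟨h, h', hlt.ne, hh, hh', rfl⟩
  obtain ⟨m, hm, T', hT', rfl⟩ := exists_eq_insert_below hTB hne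
  rw [sum_insert_below hT'] at hf
  refine ⟨m, hm, T', hT', ?_, ?_⟩ <;>
    simp only [Function.comp_apply, hf, Sym2.inf_mk, Sym2.sup_mk]
  exacts [inf_of_le_left hlt.le, sup_of_le_right hlt.le]

lemma infinite_realizes {a b : ℕ → ℕ} {B H : Set ℕ} (hH : H.Infinite)
    (hR : ∀ h ∈ H, ∀ h' ∈ H, h < h' → Realizes a b B h h') {h : ℕ} (hh : h ∈ H) :
    {h' | Realizes a b B h h'}.Infinite :=
  (hH.sdiff (Set.finite_Iic h)).mono fun h' hh' => hR h hh h' hh'.1 (not_le.1 hh'.2)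

lemma subsingleton_setOf_of_injOn {u v : ℕ → ℕ} {B : Set ℕ} (hu : Set.InjOn u B) (h : ℕ) :
    {h' | ∃ i ∈ B, u i = h ∧ v i = h'}.Subsingleton := by
  rintro _ ⟨i, hi, rfl, rfl⟩ _ ⟨j, hj, hij, rfl⟩
  rw [hu hj hi hij]

lemma strictMonoOn_of_lt_of_le {u N : ℕ → ℕ} {B : Set ℕ} (hlt : ∀ m ∈ B, N m < u m)
    (hle : ∀ m ∈ B, ∀ m' ∈ B, m < m' → u m ≤ N m') : StrictMonoOn u B :=
  fun m hm m' hm' h => (hle m hm m' hm' h).trans_lt (hlt m' hm')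

lemma le_bound_below (U : Ultrafilter ℕ) (a b : ℕ → ℕ) {B : Set ℕ} {T : Finset ℕ}
    {m m' : ℕ} (hm : m ∈ B) (hT : T ⊆ below B m) (h : m < m') :
    a (T.sum id + m) ≤ bound U a b (below B m') ∧
      b (T.sum id + m) ≤ bound U a b (below B m') ∧
      limit U a (T.sum id + m) ≤ bound U a b (below B m') := by
  simpa only [sum_insert_below hT] using le_bound (insert_subset_below hm hT h)

section Cases

variable {U : Ultrafilter ℕ} {a b : ℕ → ℕ} {B H : Set ℕ}
  (hB : ∀ m ∈ B, GoodSuccessor U a b (below B m) m)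
include hB

lemma lo_injOn (ha0 : ¬ Converges U a 0) : Set.InjOn a B :=
  (strictMonoOn_of_lt_of_le (N := fun m => bound U a b (below B m))
    (fun m hm => by
      simpa using ((hB m hm).lo ∅ (Finset.empty_subset _)).fresh (by simpa using ha0))
    (fun m hm m' _ h => by
      simpa using (le_bound_below U a b hm (Finset.empty_subset _) h).1)).injOn

lemma limit_injOn (ha0 : ¬ Converges U a 0) (ha : ∀ᶠ z in U, Converges U a z) :
    Set.InjOn (limit U a) B :=
  (strictMonoOn_of_lt_of_le (fun m hm => (hB m hm).limit_fresh ha0 ((hB m hm).lo_converges ha))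
    (fun m hm m' _ h => by
      simpa using (le_bound_below U a b hm (Finset.empty_subset _) h).2.2)).injOn

lemma eq_of_realizes_of_converges_zero (ha0 : Converges U a 0) {h h' : ℕ}
    (hR : Realizes a b B h h') : h = limit U a 0 := by
  obtain ⟨m, hm, T, hT, rfl, -⟩ := hR
  exact eq_limit_zero (fun m hm T hT => (hB m hm).lo T hT) ha0 hm hT

lemma finite_realizes_of_eventuallyDivergent (hU : U + U = U) (ha : EventuallyDivergent U a 0)
    (h : ℕ) : {h' | Realizes a b B h h'}.Finite := by
  rcases Set.eq_empty_or_nonempty {h' | Realizes a b B h h'} with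
    he | ⟨_, m₀, hm₀, T₀, hT₀, h₀, -⟩
  · simp [he]
  have fresh :
      ∀ {m T}, m ∈ B → T ⊆ below B m → bound U a b (below B m) < a (T.sum id + m) :=
    lt_of_eventuallyDivergent_zero (fun m hm T hT => (hB m hm).lo T hT) hU ha
  refine ((below B m₀).powerset.finite_toSet.image fun T => b (T.sum id + m₀)).subset ?_
  rintro _ ⟨m, hm, T, hT, rfl, rfl⟩
  rcases lt_trichotomy m m₀ with hlt | rfl | hlt
  · have := (le_bound_below U a b hm hT hlt).1
    have := fresh hm₀ hT₀
    omega
  · exact ⟨T, Finset.mem_powerset.2 hT, rfl⟩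
  · have := (le_bound_below U a b hm₀ hT₀ hlt).1
    have := fresh hm hT
    omega

lemma hi_ne_limit_of_eventuallyDivergent (hU : U + U = U) (ha0 : ¬ Converges U a 0)
    (ha : ∀ᶠ z in U, Converges U a z) (hb : EventuallyDivergent U b 0) {T : Finset ℕ}
    {m i : ℕ} (hm : m ∈ B) (hT : T ⊆ below B m) (hi : i ∈ B) :
    b (T.sum id + m) ≠ limit U a i := by
  have hdiv := eventuallyDivergent_sum (fun m hm T hT => (hB m hm).hi T hT) hb T
    (coe_subset_of_subset_below hT)
  have hfresh := ((hB m hm).hi T hT).fresh (hdiv.not_converges hU)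
  have hconv := (hB i hi).lo_converges ha
  rcases lt_trichotomy i m with hlt | rfl | hlt
  · have := (le_bound_below U a b hi (Finset.empty_subset _) hlt).2.2
    simp only [Finset.sum_empty, zero_add] at this
    omega
  · exact (hB i hi).hi_ne_limit T hT hdiv hconv
  · have := (le_bound_below U a b hm hT hlt).2.1
    have := (hB i hi).limit_fresh ha0 hconv
    omega

lemma mem_image_limit_of_realizes_clique (ha0 : ¬ Converges U a 0)
    (ha : ∀ᶠ z in U, Converges U a z) (hH : H.Infinite)
    (hR : ∀ h ∈ H, ∀ h' ∈ H, h < h' → Realizes a b B h h') {h : ℕ} (hh : h ∈ H) :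
    h ∈ limit U a '' B := by
  by_contra hlim
  refine infinite_realizes hH hR hh
    ((subsingleton_setOf_of_injOn (v := b) (lo_injOn hB ha0) h).finite.subset ?_)
  rintro _ ⟨m, hm, T, hT, rfl, rfl⟩
  rcases T.eq_empty_or_nonempty with rfl | hne
  · exact ⟨m, hm, by simp, by simp⟩
  · exact absurd ⟨T.min' hne, coe_subset_of_subset_below hT (T.min'_mem hne),
      (eq_limit_min' (fun m hm T hT => (hB m hm).lo T hT)
        (fun m hm => (hB m hm).lo_converges ha) hm hT hne).symm⟩ hlim

lemma false_of_hi_eventuallyDivergent (hU : U + U = U) (ha0 : ¬ Converges U a 0)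
    (ha : ∀ᶠ z in U, Converges U a z) (hb : EventuallyDivergent U b 0) (hH : H.Infinite)
    (hR : ∀ h ∈ H, ∀ h' ∈ H, h < h' → Realizes a b B h h') : False := by
  obtain ⟨h₁, h₁H⟩ := hH.nonempty
  obtain ⟨h₂, h₂H, h₁₂⟩ := hH.exists_gt h₁
  obtain ⟨m, hm, T, hT, -, hb₂⟩ := hR h₁ h₁H h₂ h₂H h₁₂
  obtain ⟨i, hi, hi₂⟩ := mem_image_limit_of_realizes_clique hB ha0 ha hH hR h₂H
  exact hi_ne_limit_of_eventuallyDivergent hB hU ha0 ha hb hm hT hi (hb₂.trans hi₂.symm)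

lemma finite_realizes_of_eventually_converges (ha0 : ¬ Converges U a 0)
    (ha : ∀ᶠ z in U, Converges U a z) (hb : ∀ᶠ z in U, Converges U b z) (h : ℕ) :
    {h' | Realizes a b B h h'}.Finite := by
  refine ((subsingleton_setOf_of_injOn (v := b) (lo_injOn hB ha0) h).finite.union
    (subsingleton_setOf_of_injOn (v := limit U b) (limit_injOn hB ha0 ha) h).finite).subset ?_
  rintro _ ⟨m, hm, T, hT, rfl, rfl⟩
  rcases T.eq_empty_or_nonempty with rfl | hne
  · exact Or.inl ⟨m, hm, by simp, by simp⟩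
  · exact Or.inr ⟨T.min' hne, coe_subset_of_subset_below hT (T.min'_mem hne),
      (eq_limit_min' (fun m hm T hT => (hB m hm).lo T hT)
        (fun m hm => (hB m hm).lo_converges ha) hm hT hne).symm,
      (eq_limit_min' (fun m hm T hT => (hB m hm).hi T hT)
        (fun m hm => (hB m hm).hi_converges hb) hm hT hne).symm⟩

lemma false_of_realizes_clique (hU : U + U = U) (hH : H.Infinite)
    (hR : ∀ h ∈ H, ∀ h' ∈ H, h < h' → Realizes a b B h h') : False := by
  obtain ⟨h, hh⟩ := hH.nonempty
  by_cases ha0 : Converges U a 0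
  · refine hH ((Set.finite_singleton (limit U a 0)).subset fun h hh => ?_)
    obtain ⟨h', hh'⟩ := (infinite_realizes hH hR hh).nonempty
    exact eq_of_realizes_of_converges_zero hB ha0 hh'
  by_cases ha : EventuallyDivergent U a 0
  · exact infinite_realizes hH hR hh (finite_realizes_of_eventuallyDivergent hB hU ha h)
  replace ha := eventually_converges_of_not_eventuallyDivergent ha
  by_cases hb : EventuallyDivergent U b 0
  · exact false_of_hi_eventuallyDivergent hB hU ha0 ha hb hH hR
  · exact infinite_realizes hH hR hh (finite_realizes_of_eventually_converges hB ha0 ha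
      (eventually_converges_of_not_eventuallyDivergent hb) h)

end Cases

end RamseyHindman

open RamseyHindman

theorem ramsey_not_katetov_below_hindman :
    ¬ ∃ f : ℕ → Sym2 ℕ, ∀ A : Set (Sym2 ℕ), InRamsey A → InHindman (f ⁻¹' A) := by
  rintro ⟨f, hf⟩
  obtain ⟨U, hU, hUtop⟩ := exists_idempotent_ultrafilter_le_atTop
  obtain ⟨B, hBinf, hB⟩ := exists_infinite_forall_below fun S =>
    (((eventually_all_finset S).2 fun z _ => hUtop (eventually_gt_atTop z)).and
      (eventually_goodSuccessor hU (Sym2.inf ∘ f) (Sym2.sup ∘ f) S)).exists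
  refine hf (f '' FS B) (fun H hH hsub => ?_) B hBinf fun n hn => ⟨n, hn, rfl⟩
  exact false_of_realizes_clique hB hU hH fun h hh h' hh' hlt =>
    realizes_of_pairsOf_subset hsub hh hh' hlt
end
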